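/- Let A ∈ ℝ^{n×n} be invertible, let B ∈ ℝ^{n×n}, b ∈ ℝⁿ, θ ∈ [0,1). Suppose F(x*) = 0 and ‖A^{-1}‖ < 1/[‖B‖ + θ(‖A‖ + ‖B‖)]. Then any sequence {x^k} in ℝⁿ satisfying the inexact Picard condition ‖A x^{k+1} − (B|x^k| + b)‖ ≤ θ‖F(x^k)‖ for all k ≥ 0 converges linearly to x* from any starting point x^0. -/

import Mathlib

/-!
Let `e_k = x^k - x*`. Since `x*` solves the GAVE, `A e_{k+1}` equals the inexact Picard residual
plus `B (|x^k| - |x*|)`, and `F(x^k) = A e_k - B (|x^k| - |x*|)`. As `x ↦ |x|` is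
`1`-Lipschitz, this gives `‖A e_{k+1}‖ ≤ (‖B‖ + θ (‖A‖ + ‖B‖)) ‖e_k‖`, so applying `A⁻¹`
shows that the errors contract by the factor `‖A⁻¹‖ (‖B‖ + θ (‖A‖ + ‖B‖)) < 1`.
-/

open Matrix Filter

/-- Componentwise absolute value of a vector in Euclidean space. -/
noncomputable def vabs {n : ℕ} (x : EuclideanSpace ℝ (Fin n)) : EuclideanSpace ℝ (Fin n) :=
  WithLp.toLp 2 (fun i => |x i|)

/-- A matrix acting on Euclidean space (so that vector norms are the Euclidean 2-norm). -/
noncomputable def mulV {n : ℕ} (M : Matrix (Fin n) (Fin n) ℝ) (x : EuclideanSpace ℝ (Fin n)) :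
    EuclideanSpace ℝ (Fin n) :=
  Matrix.toEuclideanCLM (𝕜 := ℝ) M x

/-- Spectral norm of a real matrix: the operator norm induced by the Euclidean vector norm. -/
noncomputable def spec {n : ℕ} (M : Matrix (Fin n) (Fin n) ℝ) : ℝ :=
  ‖Matrix.toEuclideanCLM (𝕜 := ℝ) M‖

/-- The GAVE residual function `F(x) = A x − B |x| − b`. -/
noncomputable def gaveF {n : ℕ} (A B : Matrix (Fin n) (Fin n) ℝ)
    (b : EuclideanSpace ℝ (Fin n)) (x : EuclideanSpace ℝ (Fin n)) : EuclideanSpace ℝ (Fin n) :=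
  mulV A x - mulV B (vabs x) - b

/-- The AVE residual function `A x − |x| − b` (the GAVE with `B = I`). -/
noncomputable def aveF {n : ℕ} (A : Matrix (Fin n) (Fin n) ℝ)
    (b : EuclideanSpace ℝ (Fin n)) (x : EuclideanSpace ℝ (Fin n)) : EuclideanSpace ℝ (Fin n) :=
  mulV A x - vabs x - b

/-- A sequence converges linearly to `xs`: the distances to `xs` contract by a fixed
factor `c < 1` at every step, and the sequence tends to `xs`. -/
def ConvergesLinearlyTo {n : ℕ} (x : ℕ → EuclideanSpace ℝ (Fin n))
    (xs : EuclideanSpace ℝ (Fin n)) : Prop :=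
  (∃ c : ℝ, 0 ≤ c ∧ c < 1 ∧ ∀ k : ℕ, ‖x (k + 1) - xs‖ ≤ c * ‖x k - xs‖) ∧
    Tendsto x atTop (nhds xs)

section EuclideanMatrix

variable {n : ℕ}

lemma norm_vabs_sub_vabs_le (u v : EuclideanSpace ℝ (Fin n)) :
    ‖vabs u - vabs v‖ ≤ ‖u - v‖ := by
  rw [EuclideanSpace.norm_eq, EuclideanSpace.norm_eq]
  gcongr with i
  exact abs_abs_sub_abs_le_abs_sub (u i) (v i)

lemma mulV_sub (M : Matrix (Fin n) (Fin n) ℝ) (u v : EuclideanSpace ℝ (Fin n)) :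
    mulV M (u - v) = mulV M u - mulV M v :=
  map_sub _ u v

lemma norm_mulV_le (M : Matrix (Fin n) (Fin n) ℝ) (w : EuclideanSpace ℝ (Fin n)) :
    ‖mulV M w‖ ≤ spec M * ‖w‖ :=
  (Matrix.toEuclideanCLM (𝕜 := ℝ) M).le_opNorm w

lemma mulV_inv_mulV {A : Matrix (Fin n) (Fin n) ℝ} (hA : IsUnit A)
    (w : EuclideanSpace ℝ (Fin n)) : mulV A⁻¹ (mulV A w) = w := by
  have hinv : A⁻¹ * A = 1 := Matrix.nonsing_inv_mul A ((Matrix.isUnit_iff_isUnit_det A).mp hA)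
  change Matrix.toEuclideanCLM (𝕜 := ℝ) A⁻¹ (Matrix.toEuclideanCLM (𝕜 := ℝ) A w) = w
  rw [← mul_apply_eq_comp, ← map_mul, hinv, map_one, one_apply_eq_self]

lemma norm_le_spec_inv_mul_norm_mulV {A : Matrix (Fin n) (Fin n) ℝ} (hA : IsUnit A)
    (w : EuclideanSpace ℝ (Fin n)) : ‖w‖ ≤ spec A⁻¹ * ‖mulV A w‖ :=
  calc ‖w‖ = ‖mulV A⁻¹ (mulV A w)‖ := by rw [mulV_inv_mulV hA]
    _ ≤ spec A⁻¹ * ‖mulV A w‖ := norm_mulV_le _ _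

lemma convergesLinearlyTo_of_contraction {x : ℕ → EuclideanSpace ℝ (Fin n)}
    {xs : EuclideanSpace ℝ (Fin n)} {c : ℝ} (hc0 : 0 ≤ c) (hc1 : c < 1)
    (hcontr : ∀ k, ‖x (k + 1) - xs‖ ≤ c * ‖x k - xs‖) : ConvergesLinearlyTo x xs := by
  refine ⟨⟨c, hc0, hc1, hcontr⟩, ?_⟩
  have hgeom : ∀ k, ‖x k - xs‖ ≤ c ^ k * ‖x 0 - xs‖ := fun k =>
    le_geom (u := fun k => ‖x k - xs‖) hc0 k fun j _ => hcontr j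
  have hlim : Tendsto (fun k => c ^ k * ‖x 0 - xs‖) atTop (nhds 0) := by
    simpa using (tendsto_pow_atTop_nhds_zero_of_lt_one hc0 hc1).mul_const ‖x 0 - xs‖
  rw [tendsto_iff_norm_sub_tendsto_zero]
  exact squeeze_zero (fun k => norm_nonneg _) hgeom hlim

section GAVE

variable {A B : Matrix (Fin n) (Fin n) ℝ} {b xs : EuclideanSpace ℝ (Fin n)}

lemma mulV_eq_of_gaveF_eq_zero (hxs : gaveF A B b xs = 0) :
    mulV A xs = mulV B (vabs xs) + b := by
  rw [← sub_eq_zero, ← hxs, gaveF, sub_sub]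

lemma gaveF_eq_of_gaveF_eq_zero (hxs : gaveF A B b xs = 0) (y : EuclideanSpace ℝ (Fin n)) :
    gaveF A B b y = mulV A (y - xs) - mulV B (vabs y - vabs xs) := by
  rw [mulV_sub, mulV_sub, gaveF, mulV_eq_of_gaveF_eq_zero hxs]
  abel

lemma picardResidual_eq_of_gaveF_eq_zero (hxs : gaveF A B b xs = 0)
    (y y' : EuclideanSpace ℝ (Fin n)) :
    mulV A y' - (mulV B (vabs y) + b) = mulV A (y' - xs) - mulV B (vabs y - vabs xs) := by
  rw [mulV_sub, mulV_sub, mulV_eq_of_gaveF_eq_zero hxs]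
  abel

lemma norm_mulV_vabs_sub_vabs_le (y : EuclideanSpace ℝ (Fin n)) :
    ‖mulV B (vabs y - vabs xs)‖ ≤ spec B * ‖y - xs‖ :=
  (norm_mulV_le B _).trans <| mul_le_mul_of_nonneg_left (norm_vabs_sub_vabs_le y xs) (norm_nonneg _)

lemma norm_gaveF_le_of_gaveF_eq_zero (hxs : gaveF A B b xs = 0) (y : EuclideanSpace ℝ (Fin n)) :
    ‖gaveF A B b y‖ ≤ (spec A + spec B) * ‖y - xs‖ :=
  calc ‖gaveF A B b y‖ = ‖mulV A (y - xs) - mulV B (vabs y - vabs xs)‖ := by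
        rw [gaveF_eq_of_gaveF_eq_zero hxs]
    _ ≤ ‖mulV A (y - xs)‖ + ‖mulV B (vabs y - vabs xs)‖ := norm_sub_le _ _
    _ ≤ spec A * ‖y - xs‖ + spec B * ‖y - xs‖ :=
        add_le_add (norm_mulV_le _ _) (norm_mulV_vabs_sub_vabs_le y)
    _ = (spec A + spec B) * ‖y - xs‖ := by ring

lemma norm_sub_le_of_inexact_picard_step (hA : IsUnit A) {θ : ℝ} (hθ : 0 ≤ θ)
    (hxs : gaveF A B b xs = 0) {y y' : EuclideanSpace ℝ (Fin n)}
    (hstep : ‖mulV A y' - (mulV B (vabs y) + b)‖ ≤ θ * ‖gaveF A B b y‖) :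
    ‖y' - xs‖ ≤ spec A⁻¹ * (spec B + θ * (spec A + spec B)) * ‖y - xs‖ := by
  set d := mulV B (vabs y - vabs xs)
  have hresid : ‖mulV A (y' - xs) - d‖ ≤ θ * ((spec A + spec B) * ‖y - xs‖) := by
    rw [← picardResidual_eq_of_gaveF_eq_zero hxs]
    exact hstep.trans (mul_le_mul_of_nonneg_left (norm_gaveF_le_of_gaveF_eq_zero hxs y) hθ)
  have hAe : ‖mulV A (y' - xs)‖ ≤ (spec B + θ * (spec A + spec B)) * ‖y - xs‖ :=
    calc ‖mulV A (y' - xs)‖ = ‖(mulV A (y' - xs) - d) + d‖ := by rw [sub_add_cancel]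
      _ ≤ ‖mulV A (y' - xs) - d‖ + ‖d‖ := norm_add_le _ _
      _ ≤ θ * ((spec A + spec B) * ‖y - xs‖) + spec B * ‖y - xs‖ :=
          add_le_add hresid (norm_mulV_vabs_sub_vabs_le y)
      _ = (spec B + θ * (spec A + spec B)) * ‖y - xs‖ := by ring
  calc ‖y' - xs‖ ≤ spec A⁻¹ * ‖mulV A (y' - xs)‖ := norm_le_spec_inv_mul_norm_mulV hA _
    _ ≤ spec A⁻¹ * ((spec B + θ * (spec A + spec B)) * ‖y - xs‖) :=
        mul_le_mul_of_nonneg_left hAe (norm_nonneg _)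
    _ = _ := by ring

end GAVE

end EuclideanMatrix

lemma mul_lt_one_of_lt_one_div {a d : ℝ} (ha : 0 ≤ a) (h : a < 1 / d) : a * d < 1 := by
  have hd : 0 < d := by
    by_contra! hd
    exact (ha.trans_lt h).not_ge (one_div_nonpos.mpr hd)
  simpa [hd.ne'] using mul_lt_mul_of_pos_right h hd

theorem stmt8_general {n : ℕ} (A B : Matrix (Fin n) (Fin n) ℝ)
    (b : EuclideanSpace ℝ (Fin n)) (hA : IsUnit A) (θ : ℝ) (hθ0 : 0 ≤ θ)
    (xs : EuclideanSpace ℝ (Fin n)) (hxs : gaveF A B b xs = 0)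
    (hcond : spec A⁻¹ < 1 / (spec B + θ * (spec A + spec B)))
    (x : ℕ → EuclideanSpace ℝ (Fin n))
    (hx : ∀ k : ℕ, ‖mulV A (x (k + 1)) - (mulV B (vabs (x k)) + b)‖ ≤
      θ * ‖gaveF A B b (x k)‖) :
    ConvergesLinearlyTo x xs := by
  have hnorm : 0 ≤ spec A⁻¹ := norm_nonneg _
  have hD : 0 ≤ spec B + θ * (spec A + spec B) := by
    have : 0 ≤ spec A := norm_nonneg _
    have : 0 ≤ spec B := norm_nonneg _
    positivity
  exact convergesLinearlyTo_of_contraction (mul_nonneg hnorm hD)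
    (mul_lt_one_of_lt_one_div hnorm hcond)
    fun k => norm_sub_le_of_inexact_picard_step hA hθ0 hxs (hx k)

theorem stmt8 {n : ℕ} (A B : Matrix (Fin n) (Fin n) ℝ)
    (b : EuclideanSpace ℝ (Fin n)) (hA : IsUnit A) (θ : ℝ) (hθ0 : 0 ≤ θ) (hθ1 : θ < 1)
    (xs : EuclideanSpace ℝ (Fin n)) (hxs : gaveF A B b xs = 0)
    (hcond : spec A⁻¹ < 1 / (spec B + θ * (spec A + spec B)))
    (x : ℕ → EuclideanSpace ℝ (Fin n))
    (hx : ∀ k : ℕ, ‖mulV A (x (k + 1)) - (mulV B (vabs (x k)) + b)‖ ≤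
      θ * ‖gaveF A B b (x k)‖) :
    ConvergesLinearlyTo x xs :=
  stmt8_general A B b hA θ hθ0 xs hxs hcond x hx
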